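/- arXiv:2302.05231 — 3 statements merged into one kernel-verified Lean document; each statement's English description precedes it below -/
import Mathlib

section
/- There exists a pair of orthogonal 6-cycle decompositions of the complete tripartite graph K_{4,4,4}: two partitions of the edge set of K_{4,4,4} into cycles of length 6 such that any cycle of the first partition and any cycle of the second partition share at most one edge. -/
/-- A set of edges `C` forms a cycle of length `l`: there is a graph and a closed walk
which is a cycle, has length `l`, and whose edge set is exactly `C`. -/
def IsCycleEdgeSet {V : Type*} (l : ℕ) (C : Set (Sym2 V)) : Prop :=
  ∃ (G : SimpleGraph V) (x : V) (w : G.Walk x x),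
    w.IsCycle ∧ w.length = l ∧ C = {e | e ∈ w.edges}

/-- `D` is a decomposition of the edge set of `G` into cycles of length `l`:
each member of `D` is the edge set of an `l`-cycle contained in `G`, and every
edge of `G` lies in exactly one member of `D`. -/
def IsCycleDecomposition {V : Type*} (G : SimpleGraph V) (l : ℕ)
    (D : Set (Set (Sym2 V))) : Prop :=
  (∀ C ∈ D, IsCycleEdgeSet l C ∧ C ⊆ G.edgeSet) ∧
  (∀ e ∈ G.edgeSet, ∃! C, C ∈ D ∧ e ∈ C)

/-- Two cycle decompositions are orthogonal if any member of the first and any member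
of the second share at most one edge. -/
def OrthogonalDecompositions {V : Type*} (D₁ D₂ : Set (Set (Sym2 V))) : Prop :=
  ∀ C₁ ∈ D₁, ∀ C₂ ∈ D₂, (C₁ ∩ C₂).Subsingleton


open SimpleGraph
set_option maxRecDepth 100000
set_option maxHeartbeats 2000000

private def w6 (a b c d e f : Fin 12) (h1 : a ≠ b) (h2 : b ≠ c) (h3 : c ≠ d)
    (h4 : d ≠ e) (h5 : e ≠ f) (h6 : f ≠ a) : (⊤ : SimpleGraph (Fin 12)).Walk a a :=
  .cons h1 (.cons h2 (.cons h3 (.cons h4 (.cons h5 (.cons h6 .nil)))))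

private def edgesOf (a b c d e f : Fin 12) : List (Sym2 (Fin 12)) :=
  [s(a,b), s(b,c), s(c,d), s(d,e), s(e,f), s(f,a)]

private lemma mk6 (a b c d e f : Fin 12) (h1 : a ≠ b) (h2 : b ≠ c) (h3 : c ≠ d)
    (h4 : d ≠ e) (h5 : e ≠ f) (h6 : f ≠ a)
    (hcyc : (w6 a b c d e f h1 h2 h3 h4 h5 h6).IsCycle) :
    IsCycleEdgeSet 6 {x | x ∈ edgesOf a b c d e f} :=
  ⟨⊤, a, w6 a b c d e f h1 h2 h3 h4 h5 h6, hcyc, rfl, rfl⟩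

private instance K444adjDec :
    DecidableRel (SimpleGraph.fromRel (fun x y : Fin 12 => (x : ℕ) / 4 ≠ (y : ℕ) / 4)).Adj :=
  fun x y => decidable_of_iff
    (x ≠ y ∧ ((x : ℕ) / 4 ≠ (y : ℕ) / 4 ∨ (y : ℕ) / 4 ≠ (x : ℕ) / 4)) Iff.rfl

private def L1 : Fin 8 → List (Sym2 (Fin 12)) :=
  ![edgesOf 0 4 3 8 7 11,
    edgesOf 0 5 11 1 4 10,
    edgesOf 0 6 9 3 5 8,
    edgesOf 0 7 10 5 2 9,
    edgesOf 1 5 9 7 2 6,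
    edgesOf 1 7 3 10 2 8,
    edgesOf 1 9 4 11 6 10,
    edgesOf 2 4 8 6 3 11]

private def L2 : Fin 8 → List (Sym2 (Fin 12)) :=
  ![edgesOf 0 4 11 3 5 9,
    edgesOf 0 5 8 6 1 7,
    edgesOf 0 6 2 9 1 11,
    edgesOf 0 8 4 3 7 10,
    edgesOf 1 4 9 3 10 5,
    edgesOf 1 8 7 2 4 10,
    edgesOf 2 5 11 6 3 8,
    edgesOf 2 10 6 9 7 11]

private lemma cyc1 (i : Fin 8) : IsCycleEdgeSet 6 {e | e ∈ L1 i} := by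
  fin_cases i
  · exact mk6 0 4 3 8 7 11 (by decide) (by decide) (by decide) (by decide) (by decide) (by decide) ⟨⟨⟨by decide⟩, by simp [w6]⟩, by decide⟩
  · exact mk6 0 5 11 1 4 10 (by decide) (by decide) (by decide) (by decide) (by decide) (by decide) ⟨⟨⟨by decide⟩, by simp [w6]⟩, by decide⟩
  · exact mk6 0 6 9 3 5 8 (by decide) (by decide) (by decide) (by decide) (by decide) (by decide) ⟨⟨⟨by decide⟩, by simp [w6]⟩, by decide⟩
  · exact mk6 0 7 10 5 2 9 (by decide) (by decide) (by decide) (by decide) (by decide) (by decide) ⟨⟨⟨by decide⟩, by simp [w6]⟩, by decide⟩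
  · exact mk6 1 5 9 7 2 6 (by decide) (by decide) (by decide) (by decide) (by decide) (by decide) ⟨⟨⟨by decide⟩, by simp [w6]⟩, by decide⟩
  · exact mk6 1 7 3 10 2 8 (by decide) (by decide) (by decide) (by decide) (by decide) (by decide) ⟨⟨⟨by decide⟩, by simp [w6]⟩, by decide⟩
  · exact mk6 1 9 4 11 6 10 (by decide) (by decide) (by decide) (by decide) (by decide) (by decide) ⟨⟨⟨by decide⟩, by simp [w6]⟩, by decide⟩
  · exact mk6 2 4 8 6 3 11 (by decide) (by decide) (by decide) (by decide) (by decide) (by decide) ⟨⟨⟨by decide⟩, by simp [w6]⟩, by decide⟩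

private lemma cyc2 (i : Fin 8) : IsCycleEdgeSet 6 {e | e ∈ L2 i} := by
  fin_cases i
  · exact mk6 0 4 11 3 5 9 (by decide) (by decide) (by decide) (by decide) (by decide) (by decide) ⟨⟨⟨by decide⟩, by simp [w6]⟩, by decide⟩
  · exact mk6 0 5 8 6 1 7 (by decide) (by decide) (by decide) (by decide) (by decide) (by decide) ⟨⟨⟨by decide⟩, by simp [w6]⟩, by decide⟩
  · exact mk6 0 6 2 9 1 11 (by decide) (by decide) (by decide) (by decide) (by decide) (by decide) ⟨⟨⟨by decide⟩, by simp [w6]⟩, by decide⟩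
  · exact mk6 0 8 4 3 7 10 (by decide) (by decide) (by decide) (by decide) (by decide) (by decide) ⟨⟨⟨by decide⟩, by simp [w6]⟩, by decide⟩
  · exact mk6 1 4 9 3 10 5 (by decide) (by decide) (by decide) (by decide) (by decide) (by decide) ⟨⟨⟨by decide⟩, by simp [w6]⟩, by decide⟩
  · exact mk6 1 8 7 2 4 10 (by decide) (by decide) (by decide) (by decide) (by decide) (by decide) ⟨⟨⟨by decide⟩, by simp [w6]⟩, by decide⟩
  · exact mk6 2 5 11 6 3 8 (by decide) (by decide) (by decide) (by decide) (by decide) (by decide) ⟨⟨⟨by decide⟩, by simp [w6]⟩, by decide⟩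
  · exact mk6 2 10 6 9 7 11 (by decide) (by decide) (by decide) (by decide) (by decide) (by decide) ⟨⟨⟨by decide⟩, by simp [w6]⟩, by decide⟩


private abbrev G444 : SimpleGraph (Fin 12) :=
  SimpleGraph.fromRel (fun x y : Fin 12 => (x : ℕ) / 4 ≠ (y : ℕ) / 4)

private lemma decomp (L : Fin 8 → List (Sym2 (Fin 12)))
    (hc : ∀ i, IsCycleEdgeSet 6 {e | e ∈ L i})
    (hsub : ∀ i : Fin 8, ∀ e ∈ L i, e ∈ G444.edgeSet)
    (hcov : ∀ x y : Fin 12, G444.Adj x y → ∃ i : Fin 8, s(x,y) ∈ L i)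
    (huniq : ∀ i j : Fin 8, ∀ e ∈ L i, e ∈ L j → i = j) :
    IsCycleDecomposition G444 6 (Set.range fun i => {e | e ∈ L i}) := by
  constructor
  · rintro C ⟨i, rfl⟩
    exact ⟨hc i, fun e he => hsub i e he⟩
  · intro e he
    induction e using Sym2.ind with
    | _ x y =>
    rw [SimpleGraph.mem_edgeSet] at he
    obtain ⟨i, hi⟩ := hcov x y he
    refine ⟨{e | e ∈ L i}, ⟨⟨i, rfl⟩, hi⟩, ?_⟩
    rintro C ⟨⟨j, rfl⟩, hj⟩
    rw [huniq j i _ hj hi]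

/-- `K_{4,4,4}`: the complete tripartite graph on 12 vertices, the parts being the
blocks of 4 consecutive vertices (vertices adjacent iff in distinct parts). -/
theorem orthogonal_six_cycle_decompositions_K444 :
    ∃ D₁ D₂ : Set (Set (Sym2 (Fin 12))),
      IsCycleDecomposition (SimpleGraph.fromRel (fun x y : Fin 12 => (x : ℕ) / 4 ≠ (y : ℕ) / 4)) 6 D₁ ∧
      IsCycleDecomposition (SimpleGraph.fromRel (fun x y : Fin 12 => (x : ℕ) / 4 ≠ (y : ℕ) / 4)) 6 D₂ ∧
      OrthogonalDecompositions D₁ D₂ := by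
  refine ⟨Set.range (fun i => {e | e ∈ L1 i}), Set.range (fun i => {e | e ∈ L2 i}),
    decomp L1 cyc1 (by decide) (by decide) (by decide),
    decomp L2 cyc2 (by decide) (by decide) (by decide), ?_⟩
  have orth : ∀ i j : Fin 8, ∀ x ∈ L1 i, ∀ y ∈ L1 i, x ∈ L2 j → y ∈ L2 j → x = y := by decide
  rintro C1 ⟨i, rfl⟩ C2 ⟨j, rfl⟩ x ⟨hx1, hx2⟩ y ⟨hy1, hy2⟩
  exact orth i j x hx1 y hy1 hx2 hy2
end

section
/- There exists a pair of orthogonal 6-cycle systems of order 21: two partitions of the edge set of the complete graph K_21 into cycles of length 6 such that any cycle of the first partition and any cycle of the second partition share at most one edge. -/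
/-!
The first system is cyclic: it consists of the translates modulo 21 of the base cycles
`(0, 1, 7, 8, 14, 15)`, `(0, 2, 7, 9, 14, 16)` and `(0, 3, 7, 14, 1, 10)`, whose edges realise
each difference `±1, …, ±10` exactly once. The second system is its image under a permutation
of the vertices. A list of `6`-cycles in `K₂₁` with pairwise distinct edges, `35 · 6 = 210` of
them in total, is a cycle decomposition; this edge-disjointness and the orthogonality of the two
systems are finite checks, done by kernel computation.
-/

open SimpleGraph Function

namespace SimpleGraph

theorem cycleGraph_edgeSet (n : ℕ) :
    (cycleGraph (n + 2)).edgeSet = Set.range fun i => s(i, i + 1) := by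
  ext e
  induction e using Sym2.ind with
  | _ u v =>
    simp only [mem_edgeSet, cycleGraph_adj, Set.mem_range, Sym2.eq_iff, sub_eq_iff_eq_add]
    constructor
    · rintro (rfl | rfl)
      exacts [⟨v, Or.inr ⟨rfl, add_comm _ _⟩⟩, ⟨u, Or.inl ⟨rfl, add_comm _ _⟩⟩]
    · rintro ⟨i, ⟨rfl, rfl⟩ | ⟨rfl, rfl⟩⟩
      exacts [Or.inr (add_comm _ _), Or.inl (add_comm _ _)]

theorem card_edgeFinset_cycleGraph (n : ℕ) : (cycleGraph (n + 3)).edgeFinset.card = n + 3 := by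
  have := sum_degrees_eq_twice_card_edges (cycleGraph (n + 3))
  simp only [cycleGraph_degree_three_le, Finset.sum_const, Finset.card_univ, Fintype.card_fin,
    smul_eq_mul] at this
  omega

theorem cycleGraph.edges_cycle (n : ℕ) :
    {e | e ∈ (cycleGraph.cycle n).edges} = (cycleGraph (n + 3)).edgeSet := by
  classical
  have hsub : (cycleGraph.cycle n).edges.toFinset ⊆ (cycleGraph (n + 3)).edgeFinset := by
    intro e he
    simpa using (cycleGraph.cycle n).edges_subset_edgeSet (List.mem_toFinset.mp he)
  have hcard : (cycleGraph (n + 3)).edgeFinset.card ≤ (cycleGraph.cycle n).edges.toFinset.card := by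
    rw [List.toFinset_card_of_nodup cycleGraph.isCycle_cycle.edges_nodup, Walk.length_edges,
      cycleGraph.length_cycle, card_edgeFinset_cycleGraph]
  ext e
  simpa using congrArg (e ∈ ·) (Finset.eq_of_subset_of_card_le hsub hcard)

end SimpleGraph

variable {V : Type*}

-- Addition in `Fin n` wraps around, so this is the closed walk `c 0, c 1, …, c (n - 1), c 0`.
def cycleEdgeList {n : ℕ} [NeZero n] (c : Fin n → V) : List (Sym2 V) :=
  List.ofFn fun i => s(c i, c (i + 1))

def cycleEdges {n : ℕ} [NeZero n] (c : Fin n → V) : Set (Sym2 V) :=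
  {e | e ∈ cycleEdgeList c}

theorem mem_cycleEdges {n : ℕ} [NeZero n] {c : Fin n → V} {e : Sym2 V} :
    e ∈ cycleEdges c ↔ ∃ i, s(c i, c (i + 1)) = e :=
  List.mem_ofFn

theorem cycleEdges_eq_image {n : ℕ} (c : Fin (n + 2) → V) :
    cycleEdges c = Sym2.map c '' (cycleGraph (n + 2)).edgeSet := by
  rw [cycleGraph_edgeSet, ← Set.range_comp]
  ext e
  simp only [mem_cycleEdges, Set.mem_range, comp_apply, Sym2.map_mk]

theorem isCycleEdgeSet_cycleEdges {n : ℕ} [NeZero n] (hn : 3 ≤ n) {c : Fin n → V}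
    (hc : Injective c) : IsCycleEdgeSet n (cycleEdges c) := by
  obtain ⟨m, rfl⟩ : ∃ m, n = m + 3 := ⟨n - 3, by omega⟩
  let f : cycleGraph (m + 3) →g (⊤ : SimpleGraph V) := ⟨c, fun h => hc.ne h.ne⟩
  refine ⟨⊤, c 0, (cycleGraph.cycle m).map f,
    (Walk.isCycle_map_iff_of_injective hc).mpr cycleGraph.isCycle_cycle, by simp, ?_⟩
  rw [cycleEdges_eq_image, ← cycleGraph.edges_cycle]
  ext e
  simp [Walk.edges_map, f]

theorem cycleEdges_subset_edgeSet_top {n : ℕ} [NeZero n] (hn : 2 ≤ n) {c : Fin n → V}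
    (hc : Injective c) : cycleEdges c ⊆ (⊤ : SimpleGraph V).edgeSet := by
  intro e he
  obtain ⟨i, rfl⟩ := mem_cycleEdges.mp he
  simpa [hc.eq_iff] using (by omega : n ≠ 1)

theorem isCycleDecomposition_top_of_nodup [Fintype V] [DecidableEq V] {n : ℕ} [NeZero n]
    (hn : 3 ≤ n) {L : List (Fin n → V)} (hinj : ∀ c ∈ L, Injective c)
    (hnodup : (L.flatMap cycleEdgeList).Nodup)
    (hcard : L.length * n = (Fintype.card V).choose 2) :
    IsCycleDecomposition ⊤ n (cycleEdges '' {c | c ∈ L}) := by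
  have hsub : (L.flatMap cycleEdgeList).toFinset ⊆ (⊤ : SimpleGraph V).edgeFinset := by
    intro e he
    obtain ⟨c, hc, he⟩ := List.mem_flatMap.mp (List.mem_toFinset.mp he)
    simpa using cycleEdges_subset_edgeSet_top (by omega) (hinj c hc) he
  have hcover : (L.flatMap cycleEdgeList).toFinset = (⊤ : SimpleGraph V).edgeFinset := by
    refine Finset.eq_of_subset_of_card_le hsub ?_
    rw [card_edgeFinset_top_eq_card_choose_two, List.toFinset_card_of_nodup hnodup, ← hcard,
      List.length_flatMap]
    simp [cycleEdgeList, mul_comm]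
  have hdisj : L.Pairwise (List.Disjoint on cycleEdgeList) := (List.nodup_flatMap.mp hnodup).2
  have : Std.Symm (List.Disjoint on @cycleEdgeList V n _) := ⟨fun _ _ h => h.symm⟩
  refine ⟨?_, fun e he => ?_⟩
  · rintro _ ⟨c, hc, rfl⟩
    exact ⟨isCycleEdgeSet_cycleEdges hn (hinj c hc),
      cycleEdges_subset_edgeSet_top (by omega) (hinj c hc)⟩
  · have : e ∈ (L.flatMap cycleEdgeList).toFinset := by simpa [hcover] using he
    obtain ⟨c, hc, hec⟩ := List.mem_flatMap.mp (List.mem_toFinset.mp this)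
    refine ⟨cycleEdges c, ⟨⟨c, hc, rfl⟩, hec⟩, ?_⟩
    rintro _ ⟨⟨c', hc', rfl⟩, hec'⟩
    by_contra hne
    exact hdisj.forall hc' hc (fun h => hne (h ▸ rfl)) hec' hec

theorem List.eq_of_mem_of_length_le_one {α : Type*} {l : List α} (hl : l.length ≤ 1) {a b : α}
    (ha : a ∈ l) (hb : b ∈ l) : a = b := by
  match l, hl, ha, hb with
  | [_], _, ha, hb => simp_all

theorem orthogonalDecompositions_of_length_inter_le_one [DecidableEq V] {n : ℕ} [NeZero n]
    {L₁ L₂ : List (Fin n → V)}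
    (h : ∀ c₁ ∈ L₁, ∀ c₂ ∈ L₂, (cycleEdgeList c₁ ∩ cycleEdgeList c₂).length ≤ 1) :
    OrthogonalDecompositions (cycleEdges '' {c | c ∈ L₁}) (cycleEdges '' {c | c ∈ L₂}) := by
  rintro _ ⟨c₁, hc₁, rfl⟩ _ ⟨c₂, hc₂, rfl⟩ a ⟨ha₁, ha₂⟩ b ⟨hb₁, hb₂⟩
  exact List.eq_of_mem_of_length_le_one (h c₁ hc₁ c₂ hc₂) (List.mem_inter_iff.mpr ⟨ha₁, ha₂⟩)
    (List.mem_inter_iff.mpr ⟨hb₁, hb₂⟩)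

theorem cycleEdgeList_comp {W : Type*} {n : ℕ} [NeZero n] (f : V → W) (c : Fin n → V) :
    cycleEdgeList (f ∘ c) = (cycleEdgeList c).map (Sym2.map f) := by
  simp [cycleEdgeList, List.map_ofFn, comp_def]

theorem nodup_flatMap_cycleEdgeList_map {W : Type*} {n : ℕ} [NeZero n] {f : V → W}
    (hf : Injective f) {L : List (Fin n → V)} (h : (L.flatMap cycleEdgeList).Nodup) :
    ((L.map (f ∘ ·)).flatMap cycleEdgeList).Nodup := by
  simpa [cycleEdgeList_comp, List.flatMap_map, List.map_flatMap] using
    h.map (Sym2.map.injective hf)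

def translates {k v : ℕ} (b : Fin k → Fin v) (m : ℕ) : List (Fin k → Fin v) :=
  ((List.finRange v).take m).map fun t i => b i + t

-- The first two base cycles are invariant under translation by 7, so their orbits have length 7.
def cyclicSystem : List (Fin 6 → Fin 21) :=
  translates ![0, 1, 7, 8, 14, 15] 7 ++ translates ![0, 2, 7, 9, 14, 16] 7 ++
    translates ![0, 3, 7, 14, 1, 10] 21

-- Found by computer search.
def relabelling : Fin 21 → Fin 21 :=
  ![5, 15, 19, 2, 7, 13, 0, 10, 14, 6, 20, 9, 3, 4, 1, 11, 18, 17, 12, 8, 16]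

theorem forall_mem_cyclicSystem_injective : ∀ c ∈ cyclicSystem, Injective c := by
  simpa using (by decide +kernel : cyclicSystem.all fun c => decide (Injective c))

theorem nodup_flatMap_cyclicSystem : (cyclicSystem.flatMap cycleEdgeList).Nodup := by
  decide +kernel

theorem relabelling_injective : Injective relabelling := by
  decide

theorem cyclicSystem_orthogonal_relabelling : ∀ c₁ ∈ cyclicSystem, ∀ c₂ ∈ cyclicSystem,
    (cycleEdgeList c₁ ∩ cycleEdgeList (relabelling ∘ c₂)).length ≤ 1 := by
  simpa using (by decide +kernel : cyclicSystem.all fun c₁ => cyclicSystem.all fun c₂ =>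
    decide ((cycleEdgeList c₁ ∩ cycleEdgeList (relabelling ∘ c₂)).length ≤ 1))

theorem orthogonal_six_cycle_systems_order_21 :
    ∃ D₁ D₂ : Set (Set (Sym2 (Fin 21))),
      IsCycleDecomposition (⊤ : SimpleGraph (Fin 21)) 6 D₁ ∧
      IsCycleDecomposition (⊤ : SimpleGraph (Fin 21)) 6 D₂ ∧
      OrthogonalDecompositions D₁ D₂ := by
  have hlength : cyclicSystem.length * 6 = (Fintype.card (Fin 21)).choose 2 := by decide
  refine ⟨cycleEdges '' {c | c ∈ cyclicSystem},
    cycleEdges '' {c | c ∈ cyclicSystem.map (relabelling ∘ ·)}, ?_, ?_, ?_⟩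
  · exact isCycleDecomposition_top_of_nodup (by norm_num) forall_mem_cyclicSystem_injective
      nodup_flatMap_cyclicSystem hlength
  · refine isCycleDecomposition_top_of_nodup (by norm_num) ?_
      (nodup_flatMap_cycleEdgeList_map relabelling_injective nodup_flatMap_cyclicSystem)
      (by simpa using hlength)
    simpa using fun c hc => relabelling_injective.comp (forall_mem_cyclicSystem_injective c hc)
  · refine orthogonalDecompositions_of_length_inter_le_one ?_
    simpa using cyclicSystem_orthogonal_relabelling
end

section
/- There exists a pair of orthogonal 7-cycle decompositions of the graph K_21 \ K_7 (the complete graph on 21 vertices with the edges of a complete graph on a fixed set of 7 vertices removed): two partitions of the edge set of this graph into cycles of length 7 such that any cycle of the first partition and any cycle of the second partition share at most one edge. -/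
/-!
The two decompositions are explicit: each is a list of 27 seven-cycles (`27 · 7 = 189` is the number
of edges of `K₂₁ \ K₇`), written as vertex sequences in cyclic order. That every list traces a
7-cycle, that the cycles of one list are pairwise edge-disjoint and cover the graph, and that two
cycles from different lists share at most one edge are finite checks, carried out by the kernel.
-/

open SimpleGraph

section CycleLists

variable {V : Type*}

def cycleDarts (L : List V) : List (V × V) :=
  let S := L ++ L.take 1
  S.zip S.tail

def cycleEdgeSet (L : List V) : Set (Sym2 V) :=
  {e | e ∈ (cycleDarts L).map fun d => s(d.1, d.2)}

def cycleEdgeSets (Cs : List (List V)) : Set (Set (Sym2 V)) :=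
  cycleEdgeSet '' {L | L ∈ Cs}

theorem mk_mem_cycleEdgeSet_iff {L : List V} {x y : V} :
    s(x, y) ∈ cycleEdgeSet L ↔ (x, y) ∈ cycleDarts L ∨ (y, x) ∈ cycleDarts L := by
  simp only [cycleEdgeSet, Set.mem_ofPred_eq, List.mem_map, Prod.exists, Sym2.eq_iff]
  constructor
  · rintro ⟨a, b, hab, (⟨rfl, rfl⟩ | ⟨rfl, rfl⟩)⟩
    exacts [Or.inl hab, Or.inr hab]
  · rintro (h | h)
    exacts [⟨x, y, h, Or.inl ⟨rfl, rfl⟩⟩, ⟨y, x, h, Or.inr ⟨rfl, rfl⟩⟩]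

variable {G : SimpleGraph V}

theorem exists_walk_support_edges {a : V} {t : List V} (h : (a :: t ++ [a]).IsChain G.Adj) :
    ∃ w : G.Walk a a,
      w.support = a :: t ++ [a] ∧ w.edges = (cycleDarts (a :: t)).map fun d => s(d.1, d.2) := by
  let w : G.Walk a a :=
    (Walk.ofSupport (a :: t ++ [a]) (List.cons_ne_nil _ _) h).copy (by simp) (by simp)
  have hw : w.support = a :: t ++ [a] :=
    (Walk.support_copy _ _ _).trans (Walk.support_ofSupport _ _)
  refine ⟨w, hw, ?_⟩
  rw [Walk.edges_eq_zipWith_support, hw, ← List.map_uncurry_zip_eq_zipWith]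
  rfl

theorem isCycleEdgeSet_cycleEdgeSet {L : List V} (hadj : (L ++ L.take 1).IsChain G.Adj)
    (hnd : L.Nodup) (hlen : 3 ≤ L.length) : IsCycleEdgeSet L.length (cycleEdgeSet L) := by
  obtain _ | ⟨a, t⟩ := L
  · simp at hlen
  obtain ⟨w, hsupp, hedges⟩ := exists_walk_support_edges hadj
  have hlength : w.length = t.length + 1 := by
    simpa [hsupp] using w.length_support.symm
  refine ⟨G, a, w, ?_, hlength, by rw [cycleEdgeSet, hedges]⟩
  refine Walk.isCycle_iff_isPath_tail_and_le_length.mpr ⟨?_, by simp_all⟩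
  rw [Walk.isPath_def, Walk.support_tail_of_not_nil _ (Walk.not_nil_iff_lt_length.mpr (by omega)),
    hsupp]
  exact List.nodup_append_comm.mp hnd

theorem cycleEdgeSet_subset_edgeSet {L : List V} (hadj : (L ++ L.take 1).IsChain G.Adj) :
    cycleEdgeSet L ⊆ G.edgeSet := by
  obtain _ | ⟨a, t⟩ := L
  · simp [cycleEdgeSet, cycleDarts]
  obtain ⟨w, -, hedges⟩ := exists_walk_support_edges hadj
  intro e he
  rw [cycleEdgeSet, Set.mem_ofPred_eq, ← hedges] at he
  exact w.edges_subset_edgeSet he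

end CycleLists

section SharedEdges

variable {V : Type*} [DecidableEq V]

-- Shared edges are detected on ordered pairs: the kernel decides equality of pairs far faster
-- than equality in the quotient `Sym2 V`.
def sharedDarts (L L' : List V) : List (V × V) :=
  (cycleDarts L).filter fun d => d ∈ cycleDarts L' ∨ d.swap ∈ cycleDarts L'

theorem exists_mem_sharedDarts_of_mem_inter {L L' : List V} {e : Sym2 V}
    (he : e ∈ cycleEdgeSet L ∩ cycleEdgeSet L') : ∃ d ∈ sharedDarts L L', s(d.1, d.2) = e := by
  obtain ⟨⟨x, y⟩, hd, rfl⟩ := List.mem_map.mp he.1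
  refine ⟨(x, y), List.mem_filter.mpr ⟨hd, ?_⟩, rfl⟩
  simpa using mk_mem_cycleEdgeSet_iff.mp he.2

theorem cycleEdgeSet_inter_subsingleton {L L' : List V} (h : (sharedDarts L L').length ≤ 1) :
    (cycleEdgeSet L ∩ cycleEdgeSet L').Subsingleton := by
  intro e he f hf
  obtain ⟨d, hd, rfl⟩ := exists_mem_sharedDarts_of_mem_inter he
  obtain ⟨d', hd', rfl⟩ := exists_mem_sharedDarts_of_mem_inter hf
  rw [Finset.card_le_one.mp (h.trans' (List.toFinset_card_le _)) d (by simpa) d' (by simpa)]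

theorem disjoint_cycleEdgeSet {L L' : List V} (h : sharedDarts L L' = []) :
    Disjoint (cycleEdgeSet L) (cycleEdgeSet L') :=
  Set.disjoint_iff.mpr fun _ he => by simpa [h] using exists_mem_sharedDarts_of_mem_inter he

theorem isCycleDecomposition_cycleEdgeSets {G : SimpleGraph V} {l : ℕ} (hl : 3 ≤ l)
    {Cs : List (List V)} (hcyc : ∀ L ∈ Cs, (L ++ L.take 1).IsChain G.Adj ∧ L.Nodup ∧ L.length = l)
    (hdisj : Cs.Pairwise fun L L' => sharedDarts L L' = [])
    (hcover : ∀ x y, G.Adj x y → ∃ L ∈ Cs, (x, y) ∈ cycleDarts L ∨ (y, x) ∈ cycleDarts L) :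
    IsCycleDecomposition G l (cycleEdgeSets Cs) := by
  refine ⟨?_, fun e he => ?_⟩
  · rintro _ ⟨L, hL, rfl⟩
    obtain ⟨hadj, hnd, hlen⟩ := hcyc L hL
    exact ⟨hlen ▸ isCycleEdgeSet_cycleEdgeSet hadj hnd (hlen ▸ hl),
      cycleEdgeSet_subset_edgeSet hadj⟩
  have hdisj' : Cs.Pairwise fun L L' => Disjoint (cycleEdgeSet L) (cycleEdgeSet L') :=
    hdisj.imp disjoint_cycleEdgeSet
  induction e using Sym2.ind with
  | _ x y =>
  obtain ⟨L, hL, hxy⟩ := hcover x y he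
  refine ⟨cycleEdgeSet L, ⟨⟨L, hL, rfl⟩, mk_mem_cycleEdgeSet_iff.mpr hxy⟩, ?_⟩
  rintro _ ⟨⟨L', hL', rfl⟩, hxy'⟩
  by_contra hne
  have : Std.Symm fun L L' : List V => Disjoint (cycleEdgeSet L) (cycleEdgeSet L') :=
    ⟨fun _ _ h => h.symm⟩
  exact Set.disjoint_left.mp (hdisj'.forall hL' hL (ne_of_apply_ne _ hne)) hxy'
    (mk_mem_cycleEdgeSet_iff.mpr hxy)

theorem orthogonalDecompositions_cycleEdgeSets {Cs Cs' : List (List V)}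
    (h : ∀ L ∈ Cs, ∀ L' ∈ Cs', (sharedDarts L L').length ≤ 1) :
    OrthogonalDecompositions (cycleEdgeSets Cs) (cycleEdgeSets Cs') := by
  rintro _ ⟨L, hL, rfl⟩ _ ⟨L', hL', rfl⟩
  exact cycleEdgeSet_inter_subsingleton (h L hL L' hL')

end SharedEdges

abbrev completeGraphMinusClique (n r : ℕ) : SimpleGraph (Fin n) :=
  fromRel fun x y => ¬((x : ℕ) < r ∧ (y : ℕ) < r)

def cyclesA : List (List (Fin 21)) :=
  [[0, 7, 11, 14, 19, 12, 13],
   [0, 8, 15, 1, 7, 2, 10],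
   [0, 9, 3, 12, 2, 13, 20],
   [0, 11, 4, 18, 6, 10, 17],
   [0, 12, 15, 10, 9, 17, 19],
   [0, 14, 5, 9, 20, 16, 15],
   [0, 16, 11, 1, 13, 3, 18],
   [1, 8, 13, 10, 16, 2, 17],
   [1, 9, 19, 5, 8, 7, 10],
   [1, 12, 17, 3, 8, 4, 20],
   [1, 14, 16, 18, 20, 11, 19],
   [1, 16, 9, 14, 6, 15, 18],
   [2, 8, 10, 19, 7, 17, 15],
   [2, 9, 6, 12, 20, 15, 14],
   [2, 11, 15, 13, 4, 16, 19],
   [2, 18, 17, 13, 9, 8, 20],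
   [3, 7, 18, 19, 15, 4, 14],
   [3, 10, 14, 12, 11, 17, 16],
   [3, 11, 10, 12, 4, 7, 20],
   [3, 15, 7, 9, 12, 8, 19],
   [4, 9, 11, 13, 18, 5, 17],
   [4, 10, 5, 12, 16, 6, 19],
   [5, 7, 6, 17, 8, 16, 13],
   [5, 11, 8, 6, 13, 14, 20],
   [5, 15, 9, 18, 14, 7, 16],
   [6, 11, 18, 8, 14, 17, 20],
   [7, 12, 18, 10, 20, 19, 13]]

def cyclesB : List (List (Fin 21)) :=
  [[0, 7, 17, 10, 13, 16, 20],
   [0, 8, 5, 17, 9, 12, 18],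
   [0, 9, 14, 1, 17, 4, 15],
   [0, 10, 1, 12, 5, 7, 19],
   [0, 11, 12, 2, 9, 19, 16],
   [0, 12, 8, 14, 10, 18, 13],
   [0, 14, 19, 13, 20, 12, 17],
   [1, 7, 8, 10, 20, 2, 13],
   [1, 8, 11, 3, 12, 14, 18],
   [1, 9, 10, 4, 13, 6, 20],
   [1, 11, 5, 19, 18, 17, 16],
   [1, 15, 14, 13, 3, 8, 19],
   [2, 7, 15, 10, 11, 6, 14],
   [2, 8, 20, 15, 13, 5, 10],
   [2, 11, 9, 15, 18, 3, 16],
   [2, 15, 12, 7, 14, 11, 19],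
   [2, 17, 8, 4, 7, 11, 18],
   [3, 7, 9, 6, 8, 15, 17],
   [3, 9, 18, 16, 10, 19, 15],
   [3, 10, 6, 12, 19, 17, 20],
   [3, 14, 5, 15, 11, 4, 19],
   [4, 9, 20, 5, 16, 8, 18],
   [4, 12, 13, 9, 5, 18, 20],
   [4, 14, 20, 19, 6, 7, 16],
   [6, 15, 16, 12, 10, 7, 18],
   [6, 16, 11, 20, 7, 13, 17],
   [8, 9, 16, 14, 17, 11, 13]]

theorem isCycleDecomposition_cyclesA :
    IsCycleDecomposition (completeGraphMinusClique 21 7) 7 (cycleEdgeSets cyclesA) :=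
  isCycleDecomposition_cycleEdgeSets (by norm_num) (by decide +kernel) (by decide +kernel)
    (by decide +kernel)

theorem isCycleDecomposition_cyclesB :
    IsCycleDecomposition (completeGraphMinusClique 21 7) 7 (cycleEdgeSets cyclesB) :=
  isCycleDecomposition_cycleEdgeSets (by norm_num) (by decide +kernel) (by decide +kernel)
    (by decide +kernel)

theorem orthogonalDecompositions_cyclesA_cyclesB :
    OrthogonalDecompositions (cycleEdgeSets cyclesA) (cycleEdgeSets cyclesB) :=
  orthogonalDecompositions_cycleEdgeSets (by decide +kernel)

/-- `K_21` minus `K_7`: the complete graph on 21 vertices with all edges among the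
fixed 7-element vertex set `{0,...,6}` removed. -/
theorem orthogonal_seven_cycle_decompositions_K21_minus_K7 :
    ∃ D₁ D₂ : Set (Set (Sym2 (Fin 21))),
      IsCycleDecomposition (SimpleGraph.fromRel (fun x y : Fin 21 => ¬((x : ℕ) < 7 ∧ (y : ℕ) < 7))) 7 D₁ ∧
      IsCycleDecomposition (SimpleGraph.fromRel (fun x y : Fin 21 => ¬((x : ℕ) < 7 ∧ (y : ℕ) < 7))) 7 D₂ ∧
      OrthogonalDecompositions D₁ D₂ :=
  ⟨_, _, isCycleDecomposition_cyclesA, isCycleDecomposition_cyclesB,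
    orthogonalDecompositions_cyclesA_cyclesB⟩
end
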